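/- arXiv:2210.02107 — 2 statements merged into one kernel-verified Lean document; each statement's English description precedes it below -/
import Mathlib

section
/- Under the hypotheses of the weighted elliptic problem A*A u = g with ∫ u √ρ_∞ dx = 0 and ∫ g √ρ_∞ dx = 0, one has the second-order estimate ‖A² u‖_{L²} ≤ (1 + (C_P/√T₀)‖Φ‖_{W^{1,∞}}) ‖g‖_{L²}. -/
/-! Since `√T₀ (A + A*) = Φ'` pointwise, the equation `A* v = g` for `v = A u` turns into
`A v = (Φ'/√T₀) v - g`. The triangle inequality in `L²(0, 1)`, the bound `|Φ'| ≤ CΦ` and the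
first-order estimate `‖v‖ ≤ CP ‖g‖` then give `‖A v‖ ≤ (CΦ/√T₀) CP ‖g‖ + ‖g‖`. -/

open Real MeasureTheory intervalIntegral

/-- The operator `A u = √T₀ ∂_x u − (E/(2√T₀)) u` with `E = −∂_x Φ`. -/
noncomputable def opA (T₀ : ℝ) (Φ : ℝ → ℝ) (u : ℝ → ℝ) : ℝ → ℝ :=
  fun x => Real.sqrt T₀ * deriv u x - (-(deriv Φ x)) / (2 * Real.sqrt T₀) * u x

/-- The formal adjoint `A* u = −√T₀ ∂_x u − (E/(2√T₀)) u` with `E = −∂_x Φ`. -/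
noncomputable def opAstar (T₀ : ℝ) (Φ : ℝ → ℝ) (u : ℝ → ℝ) : ℝ → ℝ :=
  fun x => -(Real.sqrt T₀ * deriv u x) - (-(deriv Φ x)) / (2 * Real.sqrt T₀) * u x

namespace MeasureTheory
variable {α : Type*} [MeasurableSpace α] {μ : Measure α} {f g : α → ℝ}

theorem MemLp.sqrt_integral_sq_eq_norm_toLp (hf : MemLp f 2 μ) :
    √(∫ x, f x ^ 2 ∂μ) = ‖hf.toLp f‖ := by
  rw [← Real.sqrt_sq (norm_nonneg (hf.toLp f)), @norm_sq_eq_re_inner ℝ, L2.inner_def]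
  congr 1
  refine integral_congr_ae ((hf.coeFn_toLp).mono fun x hx => ?_)
  simp [hx, sq]

theorem sqrt_integral_sq_sub_le (hf : MemLp f 2 μ) (hg : MemLp g 2 μ) :
    √(∫ x, (f x - g x) ^ 2 ∂μ) ≤ √(∫ x, f x ^ 2 ∂μ) + √(∫ x, g x ^ 2 ∂μ) := by
  have hfg := (hf.sub hg).sqrt_integral_sq_eq_norm_toLp
  rw [MemLp.toLp_sub hf hg] at hfg
  simp only [Pi.sub_apply] at hfg
  rw [hfg, hf.sqrt_integral_sq_eq_norm_toLp, hg.sqrt_integral_sq_eq_norm_toLp]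
  exact norm_sub_le _ _

theorem sqrt_integral_sq_le_mul_of_abs_le (hg : MemLp g 2 μ) (hf : AEStronglyMeasurable f μ)
    {c : ℝ} (hfg : ∀ x, |f x| ≤ c * |g x|) :
    √(∫ x, f x ^ 2 ∂μ) ≤ c * √(∫ x, g x ^ 2 ∂μ) := by
  have hf2 : MemLp f 2 μ := hg.of_le_mul hf (Filter.Eventually.of_forall hfg)
  rw [hf2.sqrt_integral_sq_eq_norm_toLp, hg.sqrt_integral_sq_eq_norm_toLp]
  refine Lp.norm_le_mul_norm_of_ae_le_mul ?_
  filter_upwards [hf2.coeFn_toLp, hg.coeFn_toLp] with x hfx hgx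
  simpa [hfx, hgx] using hfg x

end MeasureTheory

theorem Continuous.memLp_two_restrict_Ioc {f : ℝ → ℝ} {a b : ℝ} (hf : Continuous f) :
    MemLp f 2 (volume.restrict (Set.Ioc a b)) :=
  (memLp_two_iff_integrable_sq hf.aestronglyMeasurable).2
    ((hf.pow 2).integrableOn_Icc.mono_set Set.Ioc_subset_Icc_self)

theorem opA_eq_sub_opAstar (T₀ : ℝ) (Φ v : ℝ → ℝ) (x : ℝ) :
    opA T₀ Φ v x = deriv Φ x / √T₀ * v x - opAstar T₀ Φ v x := by
  unfold opA opAstar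
  ring

theorem continuous_opA {T₀ : ℝ} {Φ u : ℝ → ℝ} (hΦ : ContDiff ℝ 1 Φ) (hu : ContDiff ℝ 1 u) :
    Continuous (opA T₀ Φ u) := by
  have hΦ' := hΦ.continuous_deriv le_rfl
  have hu' := hu.continuous_deriv le_rfl
  have hu := hu.continuous
  unfold opA
  fun_prop

theorem elliptic_second_order_estimate_general
    (T₀ : ℝ)
    (Φ : ℝ → ℝ) (hΦ : ContDiff ℝ 2 Φ)
    (CP : ℝ)
    (CΦ : ℝ) (hCΦ : ∀ x : ℝ, |deriv Φ x| ≤ CΦ)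
    (g u : ℝ → ℝ)
    (hg : Continuous g)
    (hu : ContDiff ℝ 2 u)
    (heq : ∀ x : ℝ, opAstar T₀ Φ (opA T₀ Φ u) x = g x)
    (hfirst : Real.sqrt (∫ x in (0:ℝ)..1, opA T₀ Φ u x ^ 2)
      ≤ CP * Real.sqrt (∫ x in (0:ℝ)..1, g x ^ 2)) :
    Real.sqrt (∫ x in (0:ℝ)..1, opA T₀ Φ (opA T₀ Φ u) x ^ 2)
      ≤ (1 + CP / Real.sqrt T₀ * CΦ) * Real.sqrt (∫ x in (0:ℝ)..1, g x ^ 2) := by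
  have hΦ' : Continuous (deriv Φ) := hΦ.continuous_deriv one_le_two
  set v := opA T₀ Φ u
  have hv : Continuous v := continuous_opA (hΦ.of_le one_le_two) (hu.of_le one_le_two)
  have hAv : ∀ x, opA T₀ Φ v x = deriv Φ x / √T₀ * v x - g x := fun x => by
    rw [opA_eq_sub_opAstar, heq]
  have hCΦ0 : 0 ≤ CΦ := (abs_nonneg _).trans (hCΦ 0)
  have hdrift : ∀ x, |deriv Φ x / √T₀ * v x| ≤ CΦ / √T₀ * |v x| := fun x => by
    rw [abs_mul, abs_div, abs_of_nonneg (Real.sqrt_nonneg T₀)]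
    gcongr
    exact hCΦ x
  simp only [integral_of_le zero_le_one, hAv] at hfirst ⊢
  set V := √(∫ x in Set.Ioc (0:ℝ) 1, v x ^ 2)
  set G := √(∫ x in Set.Ioc (0:ℝ) 1, g x ^ 2)
  have hΦ'v : Continuous fun x => deriv Φ x / √T₀ * v x := by fun_prop
  calc √(∫ x in Set.Ioc (0:ℝ) 1, (deriv Φ x / √T₀ * v x - g x) ^ 2)
      ≤ √(∫ x in Set.Ioc (0:ℝ) 1, (deriv Φ x / √T₀ * v x) ^ 2) + G :=
        sqrt_integral_sq_sub_le hΦ'v.memLp_two_restrict_Ioc hg.memLp_two_restrict_Ioc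
    _ ≤ CΦ / √T₀ * V + G := by
        gcongr
        exact sqrt_integral_sq_le_mul_of_abs_le hv.memLp_two_restrict_Ioc
          hΦ'v.aestronglyMeasurable hdrift
    _ ≤ CΦ / √T₀ * (CP * G) + G := by gcongr
    _ = (1 + CP / √T₀ * CΦ) * G := by ring

/-- Under the hypotheses of the weighted elliptic problem `A*A u = g`
with `∫ u √ρ_∞ = 0` and `∫ g √ρ_∞ = 0`, and given the first-order estimate
`‖A u‖_{L²} ≤ C_P ‖g‖_{L²}`, one has the second-order estimate
`‖A² u‖_{L²} ≤ (1 + (C_P/√T₀)‖Φ‖_{W^{1,∞}}) ‖g‖_{L²}`, where `CΦ` is a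
`W^{1,∞}`-bound for `Φ` and `L²` quantities are over one period. -/
theorem elliptic_second_order_estimate
    (T₀ : ℝ) (hT₀ : 0 < T₀)
    (Φ : ℝ → ℝ) (hΦ : ContDiff ℝ 2 Φ) (hΦper : Function.Periodic Φ 1)
    (c₀ : ℝ) (hc₀ : 0 < c₀)
    (ρinf : ℝ → ℝ) (hρ : ∀ x : ℝ, ρinf x = c₀ * Real.exp (-(Φ x) / T₀))
    (CP : ℝ) (hCP : 0 < CP)
    (CΦ : ℝ) (hCΦ : ∀ x : ℝ, |deriv Φ x| ≤ CΦ)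
    (g u : ℝ → ℝ)
    (hg : Continuous g) (hgper : Function.Periodic g 1)
    (hg0 : (∫ x in (0:ℝ)..1, g x * Real.sqrt (ρinf x)) = 0)
    (hu : ContDiff ℝ 2 u) (huper : Function.Periodic u 1)
    (hu0 : (∫ x in (0:ℝ)..1, u x * Real.sqrt (ρinf x)) = 0)
    (heq : ∀ x : ℝ, opAstar T₀ Φ (opA T₀ Φ u) x = g x)
    (hfirst : Real.sqrt (∫ x in (0:ℝ)..1, opA T₀ Φ u x ^ 2)
      ≤ CP * Real.sqrt (∫ x in (0:ℝ)..1, g x ^ 2)) :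
    Real.sqrt (∫ x in (0:ℝ)..1, opA T₀ Φ (opA T₀ Φ u) x ^ 2)
      ≤ (1 + CP / Real.sqrt T₀ * CΦ) * Real.sqrt (∫ x in (0:ℝ)..1, g x ^ 2) :=
  elliptic_second_order_estimate_general T₀ Φ hΦ CP CΦ hCΦ g u hg hu heq hfirst
end

section
/- Discrete weighted Poincaré inequality: on a periodic mesh with positive weights ρ_{∞,j} summing (with Δx_j) to ρ̄_∞, every grid vector u satisfying Σ_j Δx_j u_j √ρ_{∞,j} = 0 verifies ‖u‖²_{L²} ≤ ρ̄_∞ (Σ_l |u_{l+1}/√ρ_{∞,l+1} − u_l/√ρ_{∞,l}|)². -/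
/-- discrete weighted Poincaré inequality. On a periodic mesh with
positive weights `ρ_{∞,j}` of total (weighted) mass `ρ̄_∞ = Σ_j Δx_j ρ_{∞,j}`,
every grid vector `u` satisfying `Σ_j Δx_j u_j √ρ_{∞,j} = 0` verifies
`‖u‖²_{L²} ≤ ρ̄_∞ (Σ_l |u_{l+1}/√ρ_{∞,l+1} − u_l/√ρ_{∞,l}|)²`,
with the discrete `L²` norm `‖u‖² = Σ_j Δx_j u_j²`. -/
theorem discrete_weighted_poincare
    {N : ℕ} [NeZero N]
    (Δx : ZMod N → ℝ) (hΔx : ∀ j, 0 < Δx j)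
    (ρ : ZMod N → ℝ) (hρ : ∀ j, 0 < ρ j)
    (u : ZMod N → ℝ)
    (hmean : ∑ j : ZMod N, Δx j * u j * Real.sqrt (ρ j) = 0) :
    ∑ j : ZMod N, Δx j * u j ^ 2
      ≤ (∑ j : ZMod N, Δx j * ρ j)
        * (∑ l : ZMod N,
            |u (l + 1) / Real.sqrt (ρ (l + 1)) - u l / Real.sqrt (ρ l)|) ^ 2 := by
  set v : ZMod N → ℝ := fun j => u j / Real.sqrt (ρ j) with hv
  set w : ZMod N → ℝ := fun j => Δx j * ρ j with hw
  set S : ℝ := ∑ l : ZMod N, |v (l + 1) - v l| with hS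
  have hwpos : ∀ j, 0 < w j := fun j => mul_pos (hΔx j) (hρ j)
  have hWpos : 0 < ∑ j : ZMod N, w j :=
    Finset.sum_pos (fun j _ => hwpos j) Finset.univ_nonempty
  have hSnn : 0 ≤ S := Finset.sum_nonneg fun l _ => abs_nonneg _
  -- key bound : |v j - v k| ≤ S
  have key : ∀ j k : ZMod N, |v j - v k| ≤ S := by
    intro j k
    set m := (j - k).val with hm
    have hjk : k + (m : ZMod N) = j := by
      rw [hm, ZMod.natCast_val, ZMod.cast_id]; ring
    have htel : v j - v k = ∑ i ∈ Finset.range m,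
        (v (k + ((i + 1 : ℕ) : ZMod N)) - v (k + ((i : ℕ) : ZMod N))) := by
      rw [Finset.sum_range_sub (fun i : ℕ => v (k + ((i : ℕ) : ZMod N)))]
      simp [hjk]
    calc |v j - v k| ≤ ∑ i ∈ Finset.range m,
          |v (k + ((i + 1 : ℕ) : ZMod N)) - v (k + ((i : ℕ) : ZMod N))| := by
          rw [htel]; exact Finset.abs_sum_le_sum_abs _ _
      _ = ∑ i ∈ Finset.range m, |v ((k + ((i : ℕ) : ZMod N)) + 1) - v (k + ((i : ℕ) : ZMod N))| := by
          apply Finset.sum_congr rfl; intro i _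
          congr 2
          push_cast
          ring
      _ = ∑ x ∈ (Finset.range m).image (fun i : ℕ => k + ((i : ℕ) : ZMod N)),
            |v (x + 1) - v x| := by
          symm
          apply Finset.sum_image
          intro a ha b hb hab
          have ham : a < N := lt_of_lt_of_le (Finset.mem_range.mp ha) (ZMod.val_lt _).le
          have hbm : b < N := lt_of_lt_of_le (Finset.mem_range.mp hb) (ZMod.val_lt _).le
          have h1 : (a : ZMod N) = (b : ZMod N) := add_left_cancel hab
          have h2 := congrArg ZMod.val h1
          rwa [ZMod.val_cast_of_lt ham, ZMod.val_cast_of_lt hbm] at h2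
      _ ≤ S := Finset.sum_le_sum_of_subset_of_nonneg (Finset.subset_univ _)
            (fun _ _ _ => abs_nonneg _)
  -- identities
  have hwv : ∑ j : ZMod N, w j * v j = 0 := by
    rw [← hmean]
    apply Finset.sum_congr rfl
    intro j _
    have h := Real.sq_sqrt (hρ j).le
    have hs : Real.sqrt (ρ j) ≠ 0 := Real.sqrt_ne_zero'.mpr (hρ j)
    simp only [hw, hv]
    calc Δx j * ρ j * (u j / Real.sqrt (ρ j)) = Δx j * u j * (ρ j / Real.sqrt (ρ j)) := by ring
      _ = Δx j * u j * Real.sqrt (ρ j) := by rw [Real.div_sqrt]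
  have hwv2 : ∑ j : ZMod N, w j * v j ^ 2 = ∑ j : ZMod N, Δx j * u j ^ 2 := by
    apply Finset.sum_congr rfl
    intro j _
    have hs : Real.sqrt (ρ j) ≠ 0 := Real.sqrt_ne_zero'.mpr (hρ j)
    simp only [hw, hv]
    rw [div_pow, Real.sq_sqrt (hρ j).le]
    calc Δx j * ρ j * (u j ^ 2 / ρ j) = Δx j * u j ^ 2 * (ρ j / ρ j) := by ring
      _ = Δx j * u j ^ 2 := by rw [div_self (hρ j).ne', mul_one]
  -- double-sum expansion
  have expand : ∑ j : ZMod N, ∑ k : ZMod N, w j * w k * (v j - v k) ^ 2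
      = 2 * (∑ j : ZMod N, w j) * (∑ j : ZMod N, w j * v j ^ 2)
        - 2 * (∑ j : ZMod N, w j * v j) ^ 2 := by
    have h : ∀ j k : ZMod N, w j * w k * (v j - v k) ^ 2
        = (w j * v j ^ 2) * w k + w j * (w k * v k ^ 2)
          - 2 * ((w j * v j) * (w k * v k)) := by intro j k; ring
    simp_rw [h, Finset.sum_sub_distrib, Finset.sum_add_distrib, ← Finset.mul_sum,
      ← Finset.sum_mul]
    ring
  have bound : ∑ j : ZMod N, ∑ k : ZMod N, w j * w k * (v j - v k) ^ 2
      ≤ (∑ j : ZMod N, w j) ^ 2 * S ^ 2 := by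
    calc ∑ j : ZMod N, ∑ k : ZMod N, w j * w k * (v j - v k) ^ 2
        ≤ ∑ j : ZMod N, ∑ k : ZMod N, w j * w k * S ^ 2 := by
          apply Finset.sum_le_sum; intro j _
          apply Finset.sum_le_sum; intro k _
          apply mul_le_mul_of_nonneg_left _ (mul_pos (hwpos j) (hwpos k)).le
          rw [← sq_abs (v j - v k)]
          exact pow_le_pow_left₀ (abs_nonneg _) (key j k) 2
      _ = (∑ j : ZMod N, w j) ^ 2 * S ^ 2 := by
          have h2 : ∀ j : ZMod N, ∑ k : ZMod N, w j * w k * S ^ 2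
              = w j * (∑ k : ZMod N, w k) * S ^ 2 := by
            intro j
            rw [← Finset.sum_mul, ← Finset.mul_sum]
          simp_rw [h2]
          rw [← Finset.sum_mul, ← Finset.sum_mul]
          ring
  rw [← hwv2]
  rw [expand, hwv] at bound
  nlinarith [hWpos, hSnn, sq_nonneg S]
end
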